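/- arXiv:2309.16848 — 2 statements merged into one kernel-verified Lean document; each statement's English description precedes it below -/
import Mathlib

section
/- Let h = (1,1,1,1,1,6) and h' = (1,1,1,1,2,5), viewed as coefficient vectors of polynomials of degree 5. Define p(x) = Σ h_i·binom(x+5-i,5) and p'(x) = Σ h'_i·binom(x+5-i,5). Then the polynomial q(x) = p(x)·p'(x) has degree 10, and when q is written as Σ_{i=0}^{10} g_i·binom(x+10-i,10), the vector (g_0,...,g_10) equals (1, 38, 300, 962, 2059, 7442, 7194, 7292, 4320, 854, 30), which is not unimodal (g_5 = 7442 > g_6 = 7194 < g_7 = 7292), while h and h' are unimodal. -/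
/-- The polynomial `binom(x + n - i, n) = (x+n-i)(x+n-i-1)⋯(x+n-i-n+1)/n!` in `x`. -/
noncomputable def binomBasis (n i : ℕ) : Polynomial ℚ :=
  Polynomial.C ((n.factorial : ℚ))⁻¹ *
    ∏ j ∈ Finset.range n,
      (Polynomial.X + Polynomial.C ((n : ℚ) - (i : ℚ) - (j : ℚ)))

/-- The vector `(a 0, …, a n)` is unimodal. -/
def UnimodalUpTo (a : ℕ → ℚ) (n : ℕ) : Prop :=
  ∃ i, i ≤ n ∧ (∀ j, j < i → a j ≤ a (j + 1)) ∧ (∀ j, i ≤ j → j < n → a (j + 1) ≤ a j)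

open Polynomial in
/-- The explicit expansion of the product polynomial in the monomial basis. -/
noncomputable def Qex : Polynomial ℚ :=
  C 1 + C (419/60) * X + C (2749/225) * X^2 + C (1993/360) * X^3 + C (6479/360) * X^4
  + C (-491/320) * X^5 + C (37031/4800) * X^6 + C (-689/480) * X^7 + C (809/1440) * X^8
  + C (-143/2880) * X^9 + C (121/14400) * X^10

theorem product_of_unimodal_not_unimodal :
    let h : ℕ → ℚ := fun i => ([1, 1, 1, 1, 1, 6] : List ℚ).getD i 0
    let h' : ℕ → ℚ := fun i => ([1, 1, 1, 1, 2, 5] : List ℚ).getD i 0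
    let g : ℕ → ℚ := fun i =>
      ([1, 38, 300, 962, 2059, 7442, 7194, 7292, 4320, 854, 30] : List ℚ).getD i 0
    let p := ∑ i ∈ Finset.range 6, Polynomial.C (h i) * binomBasis 5 i
    let p' := ∑ i ∈ Finset.range 6, Polynomial.C (h' i) * binomBasis 5 i
    (p * p').natDegree = 10 ∧
    p * p' = ∑ i ∈ Finset.range 11, Polynomial.C (g i) * binomBasis 10 i ∧
    ¬ UnimodalUpTo g 10 ∧
    g 5 = 7442 ∧ g 6 = 7194 ∧ g 7 = 7292 ∧
    UnimodalUpTo h 5 ∧ UnimodalUpTo h' 5 := by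
  intro h h' g p p'
  have hpq : p * p' = Qex := by
    apply Polynomial.funext
    intro x
    simp only [p, p', h, h', binomBasis, Qex, Finset.sum_range_succ, Finset.prod_range_succ,
      Finset.sum_range_zero, Finset.prod_range_zero, List.getD, Polynomial.eval_mul,
      Polynomial.eval_add, Polynomial.eval_C, Polynomial.eval_X, Polynomial.eval_one,
      Polynomial.eval_pow]
    norm_num [Nat.factorial]
    ring
  have hrq : (∑ i ∈ Finset.range 11, Polynomial.C (g i) * binomBasis 10 i) = Qex := by
    apply Polynomial.funext
    intro x
    simp only [g, binomBasis, Qex, Finset.sum_range_succ, Finset.prod_range_succ,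
      Finset.sum_range_zero, Finset.prod_range_zero, List.getD, Polynomial.eval_mul,
      Polynomial.eval_add, Polynomial.eval_C, Polynomial.eval_X, Polynomial.eval_one,
      Polynomial.eval_pow]
    norm_num [Nat.factorial]
    ring
  refine ⟨?_, by rw [hpq, hrq], ?_, rfl, rfl, rfl, ?_, ?_⟩
  · rw [hpq]
    unfold Qex
    compute_degree!
  · rintro ⟨i, hi, hinc, hdec⟩
    by_cases h6 : i ≤ 6
    · have := hdec 6 h6 (by norm_num)
      norm_num [g, List.getD] at this
    · have := hinc 5 (by omega)
      norm_num [g, List.getD] at this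
  · exact ⟨5, le_refl 5, fun j hj => by interval_cases j <;> norm_num [h, List.getD],
      fun j h1 h2 => absurd (lt_of_le_of_lt h1 h2) (lt_irrefl _)⟩
  · exact ⟨5, le_refl 5, fun j hj => by interval_cases j <;> norm_num [h', List.getD],
      fun j h1 h2 => absurd (lt_of_le_of_lt h1 h2) (lt_irrefl _)⟩
end

section
/- Let h = (1,1,1,1,1,6). Define p(x) = Σ_{i=0}^5 h_i·binom(x+5-i,5). Writing p(x)^2 in the basis binom(x+10-i,10) for i = 0,...,10 as Σ_{i=0}^{10} g_i·binom(x+10-i,10), the vector (g_0,...,g_10) equals (1, 38, 300, 962, 1849, 7417, 7034, 7272, 4610, 973, 36), which is not unimodal, while h itself is unimodal. -/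
theorem square_of_unimodal_not_unimodal :
    let h : ℕ → ℚ := fun i => ([1, 1, 1, 1, 1, 6] : List ℚ).getD i 0
    let g : ℕ → ℚ := fun i =>
      ([1, 38, 300, 962, 1849, 7417, 7034, 7272, 4610, 973, 36] : List ℚ).getD i 0
    let p := ∑ i ∈ Finset.range 6, Polynomial.C (h i) * binomBasis 5 i
    p ^ 2 = ∑ i ∈ Finset.range 11, Polynomial.C (g i) * binomBasis 10 i ∧
    ¬ UnimodalUpTo g 10 ∧
    UnimodalUpTo h 5 := by
  intro h g p
  refine ⟨?_, ?_, ?_⟩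
  · show p ^ 2 = _
    apply Polynomial.funext
    intro x
    simp only [p, h, g, binomBasis, Finset.prod_range_succ, Finset.prod_range_zero,
      Finset.sum_range_succ, Finset.sum_range_zero, List.getD, Polynomial.eval_pow,
      Polynomial.eval_mul, Polynomial.eval_add, Polynomial.eval_C, Polynomial.eval_X,
      Polynomial.eval_one]
    norm_num [Nat.factorial]
    ring
  · rintro ⟨i, hi, h1, h2⟩
    by_cases hc : i ≤ 6
    · have := h2 6 hc (by norm_num)
      simp only [g, List.getD] at this
      norm_num at this
    · have := h1 5 (by omega)
      simp only [g, List.getD] at this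
      norm_num at this
  · refine ⟨5, le_refl 5, fun j hj => ?_, fun j hj1 hj2 => by omega⟩
    interval_cases j <;> simp [h, List.getD]
end
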